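/- arXiv:1303.6710 — 4 statements merged into one kernel-verified Lean document; each statement's English description precedes it below -/
import Mathlib

section
/- There exists a vector Z with all entries strictly positive such that all entries of AZ are strictly negative. -/
/-!
Write `A = 1 - M` with `M` entrywise nonnegative and indecomposable. If `A v = μ v` with `μ < 0`,
the triangle inequality `(1 - μ) |v| = |M v| ≤ M |v|` gives `A |v| ≤ μ |v|`. Each application of
`1 + M` to a nonnegative vector strictly enlarges its positive support until it is everything, so
`Z = (1 + M) ^ p |v|` is positive; as `1 + M ≥ 0` commutes with `A`,
`A Z = (1 + M) ^ p (A |v|) ≤ μ Z < 0`.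
-/

open Finset

section posSupport

variable {n R : Type*} [Fintype n] [Zero R] [LinearOrder R]

def posSupport (x : n → R) : Finset n := {i | 0 < x i}

@[simp]
lemma mem_posSupport {x : n → R} {i : n} : i ∈ posSupport x ↔ 0 < x i := by
  simp [posSupport]

lemma posSupport_nonempty {x : n → R} (hx : 0 ≤ x) (hx0 : x ≠ 0) : (posSupport x).Nonempty := by
  obtain ⟨i, hi⟩ := Function.ne_iff.1 hx0
  exact ⟨i, mem_posSupport.2 ((hx i).lt_of_ne' hi)⟩

end posSupport

namespace Matrix

variable {n R : Type*} [Fintype n] [CommRing R] [LinearOrder R] [IsStrictOrderedRing R]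
  {M : Matrix n n R}

lemma mulVec_nonneg (hM : ∀ i j, 0 ≤ M i j) {x : n → R} (hx : 0 ≤ x) : 0 ≤ M *ᵥ x :=
  fun i => sum_nonneg fun j _ => mul_nonneg (hM i j) (hx j)

lemma mulVec_mono (hM : ∀ i j, 0 ≤ M i j) {x y : n → R} (h : x ≤ y) : M *ᵥ x ≤ M *ᵥ y := by
  simpa [mulVec_sub] using mulVec_nonneg hM (sub_nonneg.2 h)

lemma abs_mulVec_le_mulVec_abs (hM : ∀ i j, 0 ≤ M i j) (v : n → R) : |M *ᵥ v| ≤ M *ᵥ |v| :=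
  fun i => (abs_sum_le_sum_abs _ _).trans_eq <| sum_congr rfl fun j _ => by
    rw [abs_mul, abs_of_nonneg (hM i j), Pi.abs_apply]

variable [DecidableEq n]

lemma one_sub_mulVec_abs_le (hM : ∀ i j, 0 ≤ M i j) {v : n → R} {μ : R}
    (hμ : μ ≤ 1) (heig : (1 - M) *ᵥ v = μ • v) : (1 - M) *ᵥ |v| ≤ μ • |v| := by
  have hMv : M *ᵥ v = (1 - μ) • v := by
    rw [sub_mulVec, one_mulVec] at heig
    rw [sub_smul, one_smul, ← heig, sub_sub_cancel]
  rw [sub_mulVec, one_mulVec]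
  intro i
  have h := abs_mulVec_le_mulVec_abs hM v i
  simp only [hMv, Pi.abs_apply, Pi.smul_apply, smul_eq_mul, abs_mul,
    abs_of_nonneg (sub_nonneg.2 hμ)] at h
  simp only [Pi.sub_apply, Pi.smul_apply, Pi.abs_apply, smul_eq_mul]
  linarith

omit [Fintype n] in
lemma one_add_nonneg (hM : ∀ i j, 0 ≤ M i j) (i j : n) : 0 ≤ (1 + M) i j :=
  add_nonneg (by rw [one_apply]; split_ifs <;> simp) (hM i j)

lemma le_one_add_mulVec (hM : ∀ i j, 0 ≤ M i j) {x : n → R} (hx : 0 ≤ x) :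
    x ≤ (1 + M) *ᵥ x := by
  rw [add_mulVec, one_mulVec]
  exact le_add_of_nonneg_right (mulVec_nonneg hM hx)

section Indecomposable

variable (hM : ∀ i j, 0 ≤ M i j)
  (hcut : ∀ I : Set n, I.Nonempty → Iᶜ.Nonempty → ∃ i ∈ I, ∃ j ∈ Iᶜ, M i j ≠ 0)
include hM hcut

lemma posSupport_ssubset_one_add_mulVec {x : n → R} (hx : 0 ≤ x)
    (hne : (posSupport x).Nonempty) (hS : posSupport x ≠ univ) :
    posSupport x ⊂ posSupport ((1 + M) *ᵥ x) := by
  have hsub : posSupport x ⊆ posSupport ((1 + M) *ᵥ x) := fun i hi =>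
    mem_posSupport.2 ((mem_posSupport.1 hi).trans_le (le_one_add_mulVec hM hx i))
  obtain ⟨i, hi, j, hj, hij⟩ := hcut (↑(posSupport x))ᶜ
    (by simpa [Set.nonempty_compl, ← coe_univ] using hS) (by simpa using hne)
  rw [Set.mem_compl_iff, mem_coe] at hi
  rw [compl_compl, mem_coe, mem_posSupport] at hj
  refine (ssubset_iff_of_subset hsub).2 ⟨i, mem_posSupport.2 ?_, hi⟩
  have hMx : M i j * x j ≤ (M *ᵥ x) i :=
    single_le_sum (fun l _ => mul_nonneg (hM i l) (hx l)) (mem_univ j)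
  rw [add_mulVec, one_mulVec, Pi.add_apply]
  exact add_pos_of_nonneg_of_pos (hx i) ((mul_pos ((hM i j).lt_of_ne' hij) hj).trans_le hMx)

lemma one_add_pow_mulVec_pos_of_card_le (k : ℕ) {x : n → R} (hx : 0 ≤ x) (hx0 : x ≠ 0)
    (hk : Fintype.card n ≤ #(posSupport x) + k) (i : n) : 0 < ((1 + M) ^ k *ᵥ x) i := by
  induction k generalizing x with
  | zero =>
    have : posSupport x = univ := eq_univ_of_card _ (le_antisymm (card_le_univ _) hk)
    simpa using mem_posSupport.1 (by rw [this]; exact mem_univ i)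
  | succ k ih =>
    have hxy := le_one_add_mulVec hM hx
    rw [pow_succ, ← mulVec_mulVec]
    refine ih (hx.trans hxy) (fun h => hx0 (le_antisymm (h ▸ hxy) hx)) ?_
    by_cases hS : posSupport x = univ
    · have : posSupport ((1 + M) *ᵥ x) = univ := eq_univ_of_forall fun j =>
        mem_posSupport.2 ((mem_posSupport.1 (hS ▸ mem_univ j)).trans_le (hxy j))
      simp [this]
    · have := card_lt_card
        (posSupport_ssubset_one_add_mulVec hM hcut hx (posSupport_nonempty hx hx0) hS)
      omega

theorem exists_pos_one_sub_mulVec_neg {v : n → R} {μ : R} (hv : v ≠ 0) (hμ : μ < 0)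
    (heig : (1 - M) *ᵥ v = μ • v) : ∃ Z : n → R, (∀ i, 0 < Z i) ∧ ∀ i, ((1 - M) *ᵥ Z) i < 0 := by
  set N := (1 + M) ^ Fintype.card n
  have hZ : ∀ i, 0 < (N *ᵥ |v|) i := one_add_pow_mulVec_pos_of_card_le hM hcut _ (abs_nonneg v)
    (by simpa [← abs_eq_zero] using hv) (by omega)
  have hcomm : (1 - M) * N = N * (1 - M) :=
    ((Commute.one_left (1 + M)).sub_left
      ((Commute.one_right M).add_right (Commute.refl M))).pow_right _ |>.eq
  refine ⟨N *ᵥ |v|, hZ, fun i => ?_⟩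
  calc ((1 - M) *ᵥ (N *ᵥ |v|)) i = (N *ᵥ ((1 - M) *ᵥ |v|)) i := by
        rw [mulVec_mulVec, mulVec_mulVec, hcomm]
    _ ≤ (N *ᵥ (μ • |v|)) i :=
        mulVec_mono (pow_apply_nonneg (one_add_nonneg hM) _)
          (one_sub_mulVec_abs_le hM (hμ.le.trans zero_le_one) heig) i
    _ = μ * (N *ᵥ |v|) i := by rw [mulVec_smul, Pi.smul_apply, smul_eq_mul]
    _ < 0 := mul_neg_of_neg_of_pos hμ (hZ i)

end Indecomposable

end Matrix

open Matrix

theorem stmt_0_general (p : ℕ) (A : Matrix (Fin p) (Fin p) ℝ)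
    (hdiag : ∀ i, A i i = 1)
    (hoff : ∀ i j, i ≠ j → A i j ≤ 0)
    (hindec : ∀ I : Set (Fin p), I.Nonempty → Iᶜ.Nonempty →
      ∃ i ∈ I, ∃ j ∈ Iᶜ, A i j ≠ 0)
    (hneg : ∃ μ : ℝ, μ < 0 ∧ ∃ v : Fin p → ℝ, v ≠ 0 ∧ A.mulVec v = μ • v) :
    ∃ Z : Fin p → ℝ, (∀ i, 0 < Z i) ∧ ∀ i, A.mulVec Z i < 0 := by
  obtain ⟨μ, hμ, v, hv, heig⟩ := hneg
  have hM : ∀ i j, 0 ≤ (1 - A) i j := by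
    intro i j
    rcases eq_or_ne i j with rfl | hij
    · simp [hdiag]
    · simpa [one_apply_ne hij] using hoff i j hij
  have hcut : ∀ I : Set (Fin p), I.Nonempty → Iᶜ.Nonempty →
      ∃ i ∈ I, ∃ j ∈ Iᶜ, (1 - A) i j ≠ 0 := by
    intro I hI hIc
    obtain ⟨i, hi, j, hj, hij⟩ := hindec I hI hIc
    have hne : i ≠ j := fun h => hj (h ▸ hi)
    exact ⟨i, hi, j, hj, by simpa [one_apply_ne hne] using hij⟩
  simpa using exists_pos_one_sub_mulVec_neg hM hcut hv hμ (by simpa using heig)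

/-- Let `A` be a `p × p` real symmetric matrix with `1`s on the diagonal, nonpositive
off-diagonal entries, indecomposable, and with at least one strictly negative eigenvalue.
Then there exists a vector `Z` with all entries strictly positive such that all entries of
`A.mulVec Z` are strictly negative. -/
theorem stmt_0 (p : ℕ) (hp : 1 ≤ p) (A : Matrix (Fin p) (Fin p) ℝ)
    (hsymm : A.IsSymm)
    (hdiag : ∀ i, A i i = 1)
    (hoff : ∀ i j, i ≠ j → A i j ≤ 0)
    (hindec : ∀ I : Set (Fin p), I.Nonempty → Iᶜ.Nonempty →
      ∃ i ∈ I, ∃ j ∈ Iᶜ, A i j ≠ 0)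
    (hneg : ∃ μ : ℝ, μ < 0 ∧ ∃ v : Fin p → ℝ, v ≠ 0 ∧ A.mulVec v = μ • v) :
    ∃ Z : Fin p → ℝ, (∀ i, 0 < Z i) ∧ ∀ i, A.mulVec Z i < 0 :=
  stmt_0_general p A hdiag hoff hindec hneg
end

section
/- For every n ∈ ℕ, (s_α s_β)^n(α) = p_{2n+1} α + p_{2n} β and (s_β s_α)^n(β) = p_{2n} α + p_{2n+1} β, where p_m := sinh(mλ)/sinh(λ). Moreover B((s_α s_β)^n(α), (s_β s_α)^n(β)) = -cosh((4n+1)λ). -/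
/-!
Both reflections preserve the plane spanned by `α` and `β`: in coordinates, `s_α` sends
`a α + b β` to `(2 b cosh λ - a) α + b β`, and `s_β` acts symmetrically. Hence each factor of
`s_α s_β` advances the coefficient pair `(p_{m+1}, p_m)` by one step of the three-term
recurrence `p_{m+2} = 2 cosh λ · p_{m+1} - p_m`, which `p_m = sinh(mλ)/sinh λ` satisfies.
The value of `B` on the two resulting vectors reduces to a hyperbolic identity.
-/

open Real

theorem Real.sinh_add_two_mul (x y : ℝ) :
    sinh (x + 2 * y) = 2 * cosh y * sinh (x + y) - sinh x := by
  rw [sinh_add, sinh_add, cosh_two_mul, sinh_two_mul]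
  linear_combination -sinh x * (cosh_sq_sub_sinh_sq y)

theorem Real.cosh_two_mul_add_mul_sinh_sq (x y : ℝ) :
    cosh (2 * x + y) * sinh y ^ 2 =
      cosh y * (sinh x ^ 2 + sinh (x + y) ^ 2) - 2 * sinh x * sinh (x + y) := by
  rw [cosh_add, sinh_add, cosh_two_mul, sinh_two_mul]
  linear_combination
    (-sinh x ^ 2 * cosh y - 2 * sinh x * cosh x * sinh y) * cosh_sq_sub_sinh_sq y

section Reflection

variable {V : Type*} [AddCommGroup V] [Module ℝ V] (B : LinearMap.BilinForm ℝ V)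
  {ρ σ : V} {c : ℝ}

theorem apply_smul_add_smul_of_reflection {s : V → V}
    (hs : ∀ v, s v = v - (2 * B ρ v) • ρ) (hρ : B ρ ρ = 1) (hρσ : B ρ σ = -c) (a b : ℝ) :
    s (a • ρ + b • σ) = (2 * c * b - a) • ρ + b • σ := by
  rw [hs]
  simp only [map_add, map_smul, smul_eq_mul, hρ, hρσ]
  match_scalars <;> ring

theorem bilin_smul_add_smul (hρ : B ρ ρ = 1) (hσ : B σ σ = 1) (hρσ : B ρ σ = -c)
    (hσρ : B σ ρ = -c) (a b a' b' : ℝ) :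
    B (a • ρ + b • σ) (a' • ρ + b' • σ) = a * a' + b * b' - c * (a * b' + b * a') := by
  simp only [map_add, map_smul, LinearMap.add_apply, LinearMap.smul_apply, smul_eq_mul,
    hρ, hσ, hρσ, hσρ]
  ring

theorem iterate_reflection_comp_reflection {s t : V → V} {p : ℕ → ℝ}
    (hs : ∀ v, s v = v - (2 * B ρ v) • ρ) (ht : ∀ v, t v = v - (2 * B σ v) • σ)
    (hρ : B ρ ρ = 1) (hσ : B σ σ = 1) (hρσ : B ρ σ = -c) (hσρ : B σ ρ = -c)
    (hp0 : p 0 = 0) (hp1 : p 1 = 1) (hrec : ∀ m, p (m + 2) = 2 * c * p (m + 1) - p m)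
    (n : ℕ) :
    (s ∘ t)^[n] ρ = p (2 * n + 1) • ρ + p (2 * n) • σ := by
  induction n with
  | zero => simp [hp0, hp1]
  | succ n ih =>
    have hodd : p (2 * (n + 1) + 1) = 2 * c * p (2 * n + 2) - p (2 * n + 1) := hrec (2 * n + 1)
    rw [Function.iterate_succ_apply', ih, Function.comp_apply, add_comm,
      apply_smul_add_smul_of_reflection B ht hσ hσρ, ← hrec, add_comm,
      apply_smul_add_smul_of_reflection B hs hρ hρσ, hodd, mul_add_one]

end Reflection

/-- Dihedral computation: with `B(α,α) = B(β,β) = 1`, `B(α,β) = -cosh l` (`l > 0`),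
reflections `s_ρ(v) = v - 2B(ρ,v)ρ`, and `p m = sinh(m·l)/sinh l`, one has
`(s_α s_β)^n(α) = p_{2n+1} α + p_{2n} β`, `(s_β s_α)^n(β) = p_{2n} α + p_{2n+1} β`,
and `B((s_α s_β)^n(α), (s_β s_α)^n(β)) = -cosh((4n+1)l)`. -/
theorem stmt_8 (V : Type*) [AddCommGroup V] [Module ℝ V]
    (B : LinearMap.BilinForm ℝ V) (hsymm : ∀ a b : V, B a b = B b a)
    (α β : V) (l : ℝ) (hl : 0 < l)
    (hα : B α α = 1) (hβ : B β β = 1) (hαβ : B α β = -Real.cosh l)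
    (sα sβ : V → V)
    (hsα : ∀ v, sα v = v - (2 * B α v) • α)
    (hsβ : ∀ v, sβ v = v - (2 * B β v) • β)
    (p : ℕ → ℝ) (hp : ∀ m : ℕ, p m = Real.sinh ((m : ℝ) * l) / Real.sinh l)
    (n : ℕ) :
    (sα ∘ sβ)^[n] α = p (2 * n + 1) • α + p (2 * n) • β ∧
    (sβ ∘ sα)^[n] β = p (2 * n) • α + p (2 * n + 1) • β ∧
    B ((sα ∘ sβ)^[n] α) ((sβ ∘ sα)^[n] β) = -Real.cosh ((4 * (n : ℝ) + 1) * l) := by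
  have hsinh : sinh l ≠ 0 := (sinh_pos_iff.mpr hl).ne'
  have hβα : B β α = -cosh l := (hsymm β α).trans hαβ
  have hp0 : p 0 = 0 := by simp [hp]
  have hp1 : p 1 = 1 := by simp [hp, hsinh]
  have hrec (m : ℕ) : p (m + 2) = 2 * cosh l * p (m + 1) - p m := by
    simp only [hp]
    push_cast
    rw [add_mul, add_mul, one_mul, sinh_add_two_mul]
    ring
  have hαn := iterate_reflection_comp_reflection B hsα hsβ hα hβ hαβ hβα hp0 hp1 hrec n
  have hβn := iterate_reflection_comp_reflection B hsβ hsα hβ hα hβα hαβ hp0 hp1 hrec n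
  rw [add_comm] at hβn
  refine ⟨hαn, hβn, ?_⟩
  have key := cosh_two_mul_add_mul_sinh_sq (2 * n * l) l
  rw [show 2 * (2 * n * l) + l = (4 * (n : ℝ) + 1) * l by ring,
    show 2 * n * l + l = ((2 * n + 1 : ℕ) : ℝ) * l by push_cast; ring,
    show 2 * n * l = ((2 * n : ℕ) : ℝ) * l by push_cast; ring] at key
  rw [hαn, hβn, bilin_smul_add_smul B hα hβ hαβ hβα, hp, hp]
  generalize sinh (((2 * n + 1 : ℕ) : ℝ) * l) = a, sinh (((2 * n : ℕ) : ℝ) * l) = b at key ⊢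
  field_simp
  linear_combination key
end

section
/- Let β_n := (s_α s_β)^n(α) = p_{2n+1}α + p_{2n}β. If γ ∈ V satisfies B(γ,α) ≤ 0 and B(γ,β) ≤ 0 with at least one inequality strict, then B(β_n, γ) ≤ B(α, γ) for all n ≥ 0, and B(β_n, γ) → -∞ as n → ∞. Also B((s_α s_β)^n(α), (s_β s_α)^n(β)) = -cosh((4n+1)λ) ≤ -cosh(λ) = B(α, β) for all n ≥ 0. -/
/-!
Expanding in `α, β`, `B(β_n, γ) = p_{2n+1} B(α,γ) + p_{2n} B(β,γ)` with `B(α,γ), B(β,γ) ≤ 0`,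
so `1 ≤ p_{2n+1}` and `0 ≤ p_{2n} ≤ p_{2n+1} → ∞` give the bound and the divergence.
Since `B(aα + bβ, bα + aβ) = 2ab - (a² + b²) cosh λ`, the last claim is, with `x = (2n+1)λ` and
`y = 2nλ`, the identity
`2 sinh x sinh y - (sinh² x + sinh² y) cosh (x - y) = -cosh (x + y) sinh² (x - y)`.
-/

open Real Filter

namespace Real

theorem tendsto_sinh_atTop : Tendsto sinh atTop atTop :=
  tendsto_atTop_mono' atTop ((eventually_ge_atTop 0).mono fun _ hx => self_le_sinh_iff.mpr hx)
    tendsto_id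

theorem two_mul_sinh_mul_sinh_sub_sq_add_sq_mul_cosh_sub (x y : ℝ) :
    2 * sinh x * sinh y - (sinh x ^ 2 + sinh y ^ 2) * cosh (x - y) =
      -cosh (x + y) * sinh (x - y) ^ 2 := by
  rw [cosh_add, cosh_sub, sinh_sub]
  linear_combination (sinh y ^ 2 * cosh x * cosh y - 2 * sinh x * sinh y * cosh y ^ 2 +
      sinh x * sinh y ^ 3) * cosh_sq_sub_sinh_sq x +
    (sinh x ^ 2 * cosh x * cosh y - 2 * sinh x * sinh y * (sinh x ^ 2 + 1) +
      sinh x ^ 3 * sinh y) * cosh_sq_sub_sinh_sq y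

theorem two_mul_sinh_div_mul_sinh_div_sub_sq_add_sq_mul_cosh {x y : ℝ}
    (h : sinh (x - y) ≠ 0) :
    2 * (sinh x / sinh (x - y)) * (sinh y / sinh (x - y)) -
        ((sinh x / sinh (x - y)) ^ 2 + (sinh y / sinh (x - y)) ^ 2) * cosh (x - y) =
      -cosh (x + y) := by
  field_simp
  linear_combination two_mul_sinh_mul_sinh_sub_sq_add_sq_mul_cosh_sub x y

variable {l : ℝ}

theorem monotone_sinh_mul_div_sinh (hl : 0 < l) : Monotone fun x : ℝ => sinh (x * l) / sinh l :=
  fun _ _ hxy => div_le_div_of_nonneg_right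
    (sinh_le_sinh.mpr (mul_le_mul_of_nonneg_right hxy hl.le)) (sinh_pos_iff.mpr hl).le

theorem one_le_sinh_mul_div_sinh (hl : 0 < l) {x : ℝ} (hx : 1 ≤ x) : 1 ≤ sinh (x * l) / sinh l := by
  simpa [(sinh_pos_iff.mpr hl).ne'] using monotone_sinh_mul_div_sinh hl hx

theorem sinh_mul_div_sinh_nonneg (hl : 0 < l) {x : ℝ} (hx : 0 ≤ x) : 0 ≤ sinh (x * l) / sinh l := by
  simpa using monotone_sinh_mul_div_sinh hl hx

theorem tendsto_sinh_mul_div_sinh_atTop (hl : 0 < l) :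
    Tendsto (fun x : ℝ => sinh (x * l) / sinh l) atTop atTop :=
  (tendsto_sinh_atTop.comp (tendsto_id.atTop_mul_const hl)).atTop_div_const (sinh_pos_iff.mpr hl)

end Real

namespace LinearMap.BilinForm

variable {V : Type*} [AddCommGroup V] [Module ℝ V] (B : LinearMap.BilinForm ℝ V) {α β γ : V}

theorem apply_smul_add_smul_left (a b : ℝ) (v : V) :
    B (a • α + b • β) v = a * B α v + b * B β v := by
  simp

theorem apply_smul_add_smul_le_left {a b : ℝ} (hαγ : B α γ ≤ 0) (hβγ : B β γ ≤ 0) (ha : 1 ≤ a)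
    (hb : 0 ≤ b) : B (a • α + b • β) γ ≤ B α γ := by
  rw [apply_smul_add_smul_left]
  nlinarith

theorem apply_smul_add_smul_le_mul_add {a b : ℝ} (hαγ : B α γ ≤ 0) (hba : b ≤ a) :
    B (a • α + b • β) γ ≤ b * (B α γ + B β γ) := by
  rw [apply_smul_add_smul_left]
  nlinarith

theorem apply_smul_add_smul_smul_add_smul (hsymm : ∀ u v : V, B u v = B v u)
    (hα : B α α = 1) (hβ : B β β = 1) (a b : ℝ) :
    B (a • α + b • β) (b • α + a • β) = 2 * a * b + (a ^ 2 + b ^ 2) * B α β := by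
  rw [apply_smul_add_smul_left]
  simp only [map_add, map_smul, smul_eq_mul, hα, hβ, hsymm β α]
  ring

end LinearMap.BilinForm

/-- With `β_n := (s_α s_β)^n(α) = p_{2n+1} α + p_{2n} β`: if `γ` satisfies
`B(γ,α) ≤ 0` and `B(γ,β) ≤ 0` with at least one inequality strict, then
`B(β_n,γ) ≤ B(α,γ)` for all `n` and `B(β_n,γ) → -∞`. Also
`B((s_α s_β)^n(α), (s_β s_α)^n(β)) = -cosh((4n+1)l) ≤ -cosh l = B(α,β)`. -/
theorem stmt_9 (V : Type*) [AddCommGroup V] [Module ℝ V]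
    (B : LinearMap.BilinForm ℝ V) (hsymm : ∀ a b : V, B a b = B b a)
    (α β : V) (l : ℝ) (hl : 0 < l)
    (hα : B α α = 1) (hβ : B β β = 1) (hαβ : B α β = -Real.cosh l)
    (p : ℕ → ℝ) (hp : ∀ m : ℕ, p m = Real.sinh ((m : ℝ) * l) / Real.sinh l)
    (βn : ℕ → V) (hβn : ∀ n : ℕ, βn n = p (2 * n + 1) • α + p (2 * n) • β)
    (γ : V) (hγα : B γ α ≤ 0) (hγβ : B γ β ≤ 0) (hstrict : B γ α < 0 ∨ B γ β < 0) :
    (∀ n : ℕ, B (βn n) γ ≤ B α γ) ∧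
    Filter.Tendsto (fun n : ℕ => B (βn n) γ) Filter.atTop Filter.atBot ∧
    (∀ n : ℕ, B (βn n) (p (2 * n) • α + p (2 * n + 1) • β) =
        -Real.cosh ((4 * (n : ℝ) + 1) * l) ∧
      -Real.cosh ((4 * (n : ℝ) + 1) * l) ≤ B α β) := by
  rw [hsymm γ α] at hγα hstrict
  rw [hsymm γ β] at hγβ hstrict
  have hodd : ∀ n : ℕ, p (2 * n + 1) = sinh ((2 * n + 1 : ℝ) * l) / sinh l := by
    intro n; rw [hp]; push_cast; rfl
  have heven : ∀ n : ℕ, p (2 * n) = sinh ((2 * n : ℝ) * l) / sinh l := by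
    intro n; rw [hp]; push_cast; rfl
  refine ⟨fun n => ?_, ?_, fun n => ⟨?_, ?_⟩⟩
  · rw [hβn, hodd, heven]
    exact B.apply_smul_add_smul_le_left hγα hγβ (one_le_sinh_mul_div_sinh hl (by simp))
      (sinh_mul_div_sinh_nonneg hl (by positivity))
  · have hp_even : Tendsto (fun n : ℕ => p (2 * n)) atTop atTop := by
      simp only [heven]
      exact (tendsto_sinh_mul_div_sinh_atTop hl).comp
        (tendsto_natCast_atTop_atTop.const_mul_atTop two_pos)
    have hsum : B α γ + B β γ < 0 := by rcases hstrict with h | h <;> linarith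
    refine tendsto_atBot_mono (fun n => ?_) (hp_even.atTop_mul_const_of_neg hsum)
    rw [hβn, hodd, heven]
    exact B.apply_smul_add_smul_le_mul_add hγα (monotone_sinh_mul_div_sinh hl (by linarith))
  · have hxy : (2 * n + 1 : ℝ) * l - 2 * n * l = l := by ring
    have key := two_mul_sinh_div_mul_sinh_div_sub_sq_add_sq_mul_cosh
      (x := (2 * n + 1 : ℝ) * l) (y := 2 * n * l) (by rw [hxy]; exact (sinh_pos_iff.mpr hl).ne')
    rw [hxy, show (2 * n + 1 : ℝ) * l + 2 * n * l = (4 * n + 1) * l by ring] at key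
    rw [hβn, B.apply_smul_add_smul_smul_add_smul hsymm hα hβ, hαβ, hodd, heven]
    linear_combination key
  · rw [hαβ, neg_le_neg_iff, cosh_le_cosh, abs_of_pos hl, abs_of_pos (by positivity)]
    exact le_mul_of_one_le_left hl.le (le_add_of_nonneg_left (by positivity))
end

section
/- φ(s_n(z)) → +∞ and s_n(z)/φ(s_n(z)) → x as n → ∞, where s_n(z) := z - 2B(z, α_n)α_n. (Indeed, for large n one has φ(s_n(z)) = 1 - 2B(z,α_n)φ(α_n) ≥ 1 + φ(α_n)ε for a suitable ε > 0, and s_n(z)/φ(s_n(z)) = z/φ(s_n(z)) + (φ(s_n(z))-1)/φ(s_n(z)) · α_n/φ(α_n).) -/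
open Filter Topology

/-!
Write `s = z - 2B(z,α)α` and `f = φ(α)`. Since `B(α/f, α/f) = f⁻² → B(x,x) = 0`, we get
`f → ∞`, and then `φ(s) = 1 - 2 B(z, α/f) f² → ∞` because `B(z, α/f) → B(z,x) < 0`.
The vector `s - z` is a multiple of `α`, so `s = z + (φ(s) - 1) • (α/f)`; dividing by `φ(s)`
exhibits `s/φ(s)` as `z/φ(s) + (1 - 1/φ(s)) • (α/f) → x`.
-/

theorem LinearMap.BilinForm.tendsto_atTop_of_tendsto_inv_smul_of_isotropic {ι V : Type*}
    [NormedAddCommGroup V] [NormedSpace ℝ V] [FiniteDimensional ℝ V]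
    (B : LinearMap.BilinForm ℝ V) {l : Filter ι} {v : ι → V} {c : ι → ℝ} {x : V}
    (hv : ∀ i, B (v i) (v i) = 1) (hc : ∀ i, 0 < c i)
    (hlim : Tendsto (fun i => (c i)⁻¹ • v i) l (𝓝 x)) (hx : B x x = 0) :
    Tendsto c l atTop := by
  have hB : Tendsto (fun i => B ((c i)⁻¹ • v i) ((c i)⁻¹ • v i)) l (𝓝 0) :=
    hx ▸ (B.toContinuousBilinearMap.continuous₂.tendsto (x, x)).comp (hlim.prodMk_nhds hlim)
  have hB_eq : ∀ i, B ((c i)⁻¹ • v i) ((c i)⁻¹ • v i) = (c i ^ 2)⁻¹ := fun i => by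
    simp only [map_smul, LinearMap.smul_apply, smul_eq_mul, hv]
    ring
  have hsq : Tendsto (fun i => c i ^ 2) l atTop := by
    have h : Tendsto (fun i => (c i ^ 2)⁻¹) l (𝓝[>] 0) :=
      tendsto_nhdsWithin_iff.2
        ⟨by simpa only [hB_eq] using hB, .of_forall fun i => by simp [pow_pos (hc i)]⟩
    simpa only [Pi.inv_def, inv_inv] using h.inv_tendsto_nhdsGT_zero
  refine (Real.tendsto_sqrt_atTop.comp hsq).congr fun i => ?_
  exact Real.sqrt_sq (hc i).le

theorem tendsto_inv_map_smul_sub_smul {ι V : Type*} [AddCommGroup V] [Module ℝ V]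
    [TopologicalSpace V] [ContinuousAdd V] [ContinuousSMul ℝ V]
    (φ : V →ₗ[ℝ] ℝ) {l : Filter ι} {y : ι → V} {r : ι → ℝ} {z x : V} (hz : φ z = 1)
    (hy : Tendsto (fun i => (φ (y i))⁻¹ • y i) l (𝓝 x))
    (hφ : Tendsto (fun i => φ (z - r i • y i)) l atTop) :
    Tendsto (fun i => (φ (z - r i • y i))⁻¹ • (z - r i • y i)) l (𝓝 x) := by
  set g := fun i => φ (z - r i • y i) with hg
  have hg_eq : ∀ i, g i = 1 - r i * φ (y i) := fun i => by simp [hg, hz]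
  have hlim : Tendsto (fun i => (g i)⁻¹ • z + (1 - (g i)⁻¹) • ((φ (y i))⁻¹ • y i)) l
      (𝓝 ((0 : ℝ) • z + (1 - 0 : ℝ) • x)) :=
    (hφ.inv_tendsto_atTop.smul_const z).add ((tendsto_const_nhds.sub hφ.inv_tendsto_atTop).smul hy)
  rw [zero_smul, sub_zero, one_smul, zero_add] at hlim
  refine hlim.congr' ?_
  filter_upwards [hφ.eventually_ge_atTop 2] with i hi
  have hφy : φ (y i) ≠ 0 := fun h => by simp [hg_eq, h] at hi
  have hgi : g i ≠ 0 := (by linarith : (0 : ℝ) < g i).ne'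
  have hcoef : (1 - (g i)⁻¹) * (φ (y i))⁻¹ = -(g i)⁻¹ * r i := by
    field_simp
    linear_combination hg_eq i
  rw [smul_smul, hcoef, smul_sub, smul_smul, neg_mul, neg_smul, sub_eq_add_neg]

theorem stmt_13_general (V : Type*) [NormedAddCommGroup V] [NormedSpace ℝ V]
    [FiniteDimensional ℝ V]
    (B : LinearMap.BilinForm ℝ V)
    (φ : V →ₗ[ℝ] ℝ) (α : ℕ → V) (x : V)
    (hnorm : ∀ n, B (α n) (α n) = 1) (hpos : ∀ n, 0 < φ (α n))
    (hconv : Tendsto (fun n => (φ (α n))⁻¹ • α n) atTop (nhds x))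
    (hx : B x x = 0)
    (z : V) (hz : φ z = 1) (hzx : B z x < 0) :
    Tendsto (fun n => φ (z - (2 * B z (α n)) • α n)) atTop atTop ∧
    Tendsto (fun n => (φ (z - (2 * B z (α n)) • α n))⁻¹ • (z - (2 * B z (α n)) • α n))
      atTop (nhds x) := by
  have hφα : Tendsto (fun n => φ (α n)) atTop atTop :=
    B.tendsto_atTop_of_tendsto_inv_smul_of_isotropic hnorm hpos hconv hx
  have hBz : Tendsto (fun n => B z ((φ (α n))⁻¹ • α n)) atTop (𝓝 (B z x)) :=
    ((B z).continuous_of_finiteDimensional.tendsto x).comp hconv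
  have hφs : ∀ n, φ (z - (2 * B z (α n)) • α n)
      = 1 + -2 * B z ((φ (α n))⁻¹ • α n) * φ (α n) ^ 2 := fun n => by
    simp only [map_sub, map_smul, smul_eq_mul, hz]
    field_simp [(hpos n).ne']
    ring
  have htop : Tendsto (fun n => φ (z - (2 * B z (α n)) • α n)) atTop atTop := by
    simp only [hφs]
    exact tendsto_atTop_add_const_left _ 1
      ((hBz.const_mul (-2)).pos_mul_atTop (by linarith) ((tendsto_pow_atTop two_ne_zero).comp hφα))
  exact ⟨htop, tendsto_inv_map_smul_sub_smul φ hz hconv htop⟩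

/-- With `α_n/φ(α_n) → x`, `B(x,x) = 0`, `φ(z) = 1` and `B(z,x) < 0`, setting
`s_n(z) := z - 2B(z,α_n)α_n`, one has `φ(s_n(z)) → +∞` and
`s_n(z)/φ(s_n(z)) → x`. -/
theorem stmt_13 (V : Type*) [NormedAddCommGroup V] [NormedSpace ℝ V]
    [FiniteDimensional ℝ V]
    (B : LinearMap.BilinForm ℝ V) (hsymm : ∀ a b : V, B a b = B b a)
    (φ : V →ₗ[ℝ] ℝ) (α : ℕ → V) (x : V)
    (hnorm : ∀ n, B (α n) (α n) = 1) (hpos : ∀ n, 0 < φ (α n))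
    (hconv : Tendsto (fun n => (φ (α n))⁻¹ • α n) atTop (nhds x))
    (hx : B x x = 0)
    (z : V) (hz : φ z = 1) (hzx : B z x < 0) :
    Tendsto (fun n => φ (z - (2 * B z (α n)) • α n)) atTop atTop ∧
    Tendsto (fun n => (φ (z - (2 * B z (α n)) • α n))⁻¹ • (z - (2 * B z (α n)) • α n))
      atTop (nhds x) :=
  stmt_13_general V B φ α x hnorm hpos hconv hx z hz hzx
end
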